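/- arXiv:2210.14569 — 14 statements merged into one kernel-verified Lean document; each statement's English description precedes it below -/
import Mathlib

section
/- Let G be a Rota-Baxter group with Rota-Baxter operator B (satisfying B(a)B(b) = B(aB(a)bB(a)^{-1}) for all a,b in G). Define B₁(a) = aB(a) and B₂(a) = B(a)^{-1}. Then (G, B₁, B₂) is a Rota-Baxter system of groups, i.e., B₁(a)B₁(b) = B₁(B₁(a)bB₂(a)) and B₂(b)B₂(a) = B₂(B₁(a)bB₂(a)) for all a,b in G. -/
theorem stmt_0 {G : Type*} [Group G] (B : G → G)
    (hB : ∀ a b : G, B a * B b = B (a * B a * b * (B a)⁻¹))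
    (B₁ B₂ : G → G) (hB₁ : ∀ a, B₁ a = a * B a) (hB₂ : ∀ a, B₂ a = (B a)⁻¹) :
    (∀ a b : G, B₁ a * B₁ b = B₁ (B₁ a * b * B₂ a)) ∧
    (∀ a b : G, B₂ b * B₂ a = B₂ (B₁ a * b * B₂ a)) := by
  -- `B₁ a * b * B₂ a` is exactly the argument of `B` in the Rota-Baxter identity.
  have harg : ∀ a b, B₁ a * b * B₂ a = a * B a * b * (B a)⁻¹ := fun a b => by rw [hB₁, hB₂]
  refine ⟨fun a b => ?_, fun a b => ?_⟩
  · rw [harg, hB₁, hB₁, hB₁, ← hB]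
    group
  · rw [harg, hB₂, hB₂, hB₂, ← hB, mul_inv_rev]
end

section
/- Let G be a semigroup and let G₁, G₂ be two subsemigroups of G such that every element a of G can be decomposed uniquely as a = a₁a₂ with a₁ ∈ G₁ and a₂ ∈ G₂. Define B₁(a) = a₁ and B₂(a) = a₂. Then (G, B₁, B₂) is a Rota-Baxter system of semigroups. -/
theorem stmt_1 {G : Type*} [Semigroup G] (G₁ G₂ : Subsemigroup G) (B₁ B₂ : G → G)
    (hmem : ∀ a : G, B₁ a ∈ G₁ ∧ B₂ a ∈ G₂ ∧ a = B₁ a * B₂ a)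
    (huniq : ∀ (a x y : G), x ∈ G₁ → y ∈ G₂ → a = x * y → x = B₁ a ∧ y = B₂ a) :
    (∀ a b : G, B₁ a * B₁ b = B₁ (B₁ a * b * B₂ a)) ∧
    (∀ a b : G, B₂ b * B₂ a = B₂ (B₁ a * b * B₂ a)) := by
  have factors (a b : G) :
      B₁ a * B₁ b = B₁ (B₁ a * b * B₂ a) ∧ B₂ b * B₂ a = B₂ (B₁ a * b * B₂ a) := by
    have hfactorization : B₁ a * b * B₂ a = (B₁ a * B₁ b) * (B₂ b * B₂ a) := by
      rw [mul_assoc (B₁ a), mul_assoc (B₁ a), ← mul_assoc (B₁ b), ← (hmem b).2.2]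
    exact huniq _ _ _ (G₁.mul_mem (hmem a).1 (hmem b).1) (G₂.mul_mem (hmem b).2.1 (hmem a).2.1)
      hfactorization
  exact ⟨fun a b => (factors a b).1, fun a b => (factors a b).2⟩
end

section
/- Let G be a group, Ψ: G → G a group homomorphism, and B: G → G a Ψ-twisted Rota-Baxter operator, i.e., B(a)B(b) = B(B(a)bΨ(B(a)^{-1})) for all a,b ∈ G. Define B₁ = B and B₂(a) = Ψ(B(a)^{-1}). Then (G, B₁, B₂) is a Rota-Baxter system of groups. -/
theorem map_inv_mul_map_inv_of_twisted_rotaBaxter {G : Type*} [Group G] (Ψ : G →* G)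
    {B : G → G} (hB : ∀ a b : G, B a * B b = B (B a * b * Ψ (B a)⁻¹)) (a b : G) :
    Ψ (B b)⁻¹ * Ψ (B a)⁻¹ = Ψ (B (B a * b * Ψ (B a)⁻¹))⁻¹ := by
  rw [← hB, mul_inv_rev, map_mul]

theorem stmt_2 {G : Type*} [Group G] (Ψ : G →* G) (B : G → G)
    (hB : ∀ a b : G, B a * B b = B (B a * b * Ψ (B a)⁻¹))
    (B₁ B₂ : G → G) (hB₁ : ∀ a, B₁ a = B a) (hB₂ : ∀ a, B₂ a = Ψ (B a)⁻¹) :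
    (∀ a b : G, B₁ a * B₁ b = B₁ (B₁ a * b * B₂ a)) ∧
    (∀ a b : G, B₂ b * B₂ a = B₂ (B₁ a * b * B₂ a)) := by
  simp only [hB₁, hB₂]
  exact ⟨hB, map_inv_mul_map_inv_of_twisted_rotaBaxter Ψ hB⟩
end

section
/- Let G be a group with maps B₁, B₂: G → G, and define the descendent operation a ∘ b = B₁(a)·b·B₂(a). Then (G, B₁, B₂) is a Rota-Baxter system if and only if ∘ is associative and B₁ is a semigroup homomorphism from (G, ∘) to (G, ·). -/
namespace RotaBaxterSystem

variable {G : Type*} [Group G] (B₁ B₂ : G → G)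

def descendent (a b : G) : G := B₁ a * b * B₂ a

theorem descendent_assoc
    (h₁ : ∀ a b, B₁ a * B₁ b = B₁ (descendent B₁ B₂ a b))
    (h₂ : ∀ a b, B₂ b * B₂ a = B₂ (descendent B₁ B₂ a b)) (a b c : G) :
    descendent B₁ B₂ (descendent B₁ B₂ a b) c = descendent B₁ B₂ a (descendent B₁ B₂ b c) := by
  simp only [descendent] at h₁ h₂ ⊢
  rw [← h₁, ← h₂]
  group

/-- Evaluating associativity at `c = 1` gives `B₁ (a ∘ b) B₂ (a ∘ b) = B₁ a B₁ b B₂ b B₂ a`;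
cancelling `B₁ (a ∘ b) = B₁ a B₁ b` leaves the identity for `B₂`. -/
theorem antimultiplicative_of_descendent_assoc
    (hassoc : ∀ a b c, descendent B₁ B₂ (descendent B₁ B₂ a b) c =
      descendent B₁ B₂ a (descendent B₁ B₂ b c))
    (h₁ : ∀ a b, B₁ (descendent B₁ B₂ a b) = B₁ a * B₁ b) (a b : G) :
    B₂ b * B₂ a = B₂ (descendent B₁ B₂ a b) := by
  have key := hassoc a b 1
  rw [descendent, h₁, descendent, descendent, descendent] at key
  simp only [mul_one, mul_assoc, mul_right_inj] at key
  simpa only [descendent, mul_assoc] using key.symm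

end RotaBaxterSystem

theorem stmt_3 {G : Type*} [Group G] (B₁ B₂ : G → G)
    (circ : G → G → G) (hcirc : ∀ a b, circ a b = B₁ a * b * B₂ a) :
    ((∀ a b : G, B₁ a * B₁ b = B₁ (circ a b)) ∧
     (∀ a b : G, B₂ b * B₂ a = B₂ (circ a b))) ↔
    ((∀ a b c : G, circ (circ a b) c = circ a (circ b c)) ∧
     (∀ a b : G, B₁ (circ a b) = B₁ a * B₁ b)) := by
  obtain rfl : circ = RotaBaxterSystem.descendent B₁ B₂ := funext₂ hcirc
  constructor
  · rintro ⟨h₁, h₂⟩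
    exact ⟨RotaBaxterSystem.descendent_assoc B₁ B₂ h₁ h₂, fun a b => (h₁ a b).symm⟩
  · rintro ⟨hassoc, h₁⟩
    exact ⟨fun a b => (h₁ a b).symm,
      RotaBaxterSystem.antimultiplicative_of_descendent_assoc B₁ B₂ hassoc h₁⟩
end

section
/- Let G be a group with maps B₁, B₂: G → G, and define the descendent operation a ∘ b = B₁(a)·b·B₂(a). Then (G, B₁, B₂) is a Rota-Baxter system if and only if ∘ is associative and B₂ is a semigroup anti-homomorphism from (G, ∘) to (G, ·), i.e., B₂(a ∘ b) = B₂(b)B₂(a). -/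
/-! A Rota–Baxter system says that `B₁` is a homomorphism and `B₂` an anti-homomorphism from
`(G, ∘)` to `(G, ·)`. Given the second, associativity of `∘` is equivalent to the first:
`(a ∘ b) ∘ c = B₁(a ∘ b) c B₂(b) B₂(a)` and `a ∘ (b ∘ c) = B₁(a) B₁(b) c B₂(b) B₂(a)`, so
associativity follows from multiplicativity of `B₁`, and conversely taking `c = 1` and
cancelling `B₂(b) B₂(a)` recovers it. -/

namespace RotaBaxterSystem

variable {G : Type*} [Group G] (B₁ B₂ : G → G)

def descendentOp (a b : G) : G := B₁ a * b * B₂ a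

variable {B₁ B₂}

theorem descendentOp_assoc
    (h₁ : ∀ a b, B₁ a * B₁ b = B₁ (descendentOp B₁ B₂ a b))
    (h₂ : ∀ a b, B₂ (descendentOp B₁ B₂ a b) = B₂ b * B₂ a) (a b c : G) :
    descendentOp B₁ B₂ (descendentOp B₁ B₂ a b) c =
      descendentOp B₁ B₂ a (descendentOp B₁ B₂ b c) := by
  simp only [descendentOp] at h₁ h₂ ⊢
  rw [← h₁, h₂]
  group

theorem mul_eq_of_descendentOp_assoc
    (hassoc : ∀ a b c, descendentOp B₁ B₂ (descendentOp B₁ B₂ a b) c =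
      descendentOp B₁ B₂ a (descendentOp B₁ B₂ b c))
    (h₂ : ∀ a b, B₂ (descendentOp B₁ B₂ a b) = B₂ b * B₂ a) (a b : G) :
    B₁ a * B₁ b = B₁ (descendentOp B₁ B₂ a b) := by
  refine mul_right_cancel (b := B₂ b * B₂ a) ?_
  calc B₁ a * B₁ b * (B₂ b * B₂ a)
      = descendentOp B₁ B₂ a (descendentOp B₁ B₂ b 1) := by simp only [descendentOp]; group
    _ = descendentOp B₁ B₂ (descendentOp B₁ B₂ a b) 1 := (hassoc a b 1).symm
    _ = B₁ (descendentOp B₁ B₂ a b) * (B₂ b * B₂ a) := by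
      rw [← h₂, descendentOp, mul_one]

end RotaBaxterSystem

open RotaBaxterSystem in
theorem stmt_4 {G : Type*} [Group G] (B₁ B₂ : G → G)
    (circ : G → G → G) (hcirc : ∀ a b, circ a b = B₁ a * b * B₂ a) :
    ((∀ a b : G, B₁ a * B₁ b = B₁ (circ a b)) ∧
     (∀ a b : G, B₂ b * B₂ a = B₂ (circ a b))) ↔
    ((∀ a b c : G, circ (circ a b) c = circ a (circ b c)) ∧
     (∀ a b : G, B₂ (circ a b) = B₂ b * B₂ a)) := by
  obtain rfl : circ = descendentOp B₁ B₂ := funext₂ hcirc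
  constructor
  · rintro ⟨h₁, h₂⟩
    exact ⟨descendentOp_assoc h₁ fun a b => (h₂ a b).symm, fun a b => (h₂ a b).symm⟩
  · rintro ⟨hassoc, h₂⟩
    exact ⟨mul_eq_of_descendentOp_assoc hassoc h₂, fun a b => (h₂ a b).symm⟩
end

section
/- Let G be a group with maps B₁, B₂: G → G such that the descendent operation a ∘ b = B₁(a)·b·B₂(a) is associative. If the center of G is trivial, then (G, B₁, B₂) is a Rota-Baxter system, i.e., B₁(a)B₁(b) = B₁(a ∘ b) and B₂(b)B₂(a) = B₂(a ∘ b) for all a,b ∈ G. -/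
/-!
Expanding both sides of `(a ∘ b) ∘ c = a ∘ (b ∘ c)` shows that the maps
`c ↦ B₁ (a ∘ b) * c * B₂ (a ∘ b)` and `c ↦ (B₁ a * B₁ b) * c * (B₂ b * B₂ a)` coincide.
Two maps `c ↦ u * c * v` and `c ↦ p * c * q` agree only if `p⁻¹ * u` is central, so in a
centreless group their outer factors coincide, which are exactly the Rota-Baxter identities.
-/

section Sandwich

variable {G : Type*} [Group G] {u v p q : G}

theorem inv_mul_mem_center_of_forall_mul_mul_eq (h : ∀ c, u * c * v = p * c * q) :
    p⁻¹ * u ∈ Subgroup.center G := by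
  have hv : v = u⁻¹ * p * q := by
    have h1 := h 1
    rw [mul_one, mul_one] at h1
    rw [mul_assoc, ← h1]
    group
  rw [Subgroup.mem_center_iff]
  intro c
  have hc : u * c * u⁻¹ * p = p * c := by
    have := h c
    rw [hv] at this
    exact mul_right_cancel (b := q) (by rw [← this]; group)
  calc c * (p⁻¹ * u) = p⁻¹ * (p * c) * p⁻¹ * u := by group
    _ = p⁻¹ * (u * c * u⁻¹ * p) * p⁻¹ * u := by rw [hc]
    _ = p⁻¹ * u * c := by group

theorem eq_and_eq_of_forall_mul_mul_eq (hcenter : ∀ z ∈ Subgroup.center G, z = 1)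
    (h : ∀ c, u * c * v = p * c * q) : u = p ∧ v = q := by
  have hup : u = p :=
    (inv_mul_eq_one.mp (hcenter _ (inv_mul_mem_center_of_forall_mul_mul_eq h))).symm
  refine ⟨hup, ?_⟩
  have h1 := h 1
  rw [mul_one, mul_one, hup] at h1
  exact mul_left_cancel h1

end Sandwich

theorem stmt_6 {G : Type*} [Group G] (B₁ B₂ : G → G)
    (circ : G → G → G) (hcirc : ∀ a b, circ a b = B₁ a * b * B₂ a)
    (hassoc : ∀ a b c : G, circ (circ a b) c = circ a (circ b c))
    (hcenter : ∀ a : G, a ∈ Subgroup.center G → a = 1) :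
    (∀ a b : G, B₁ a * B₁ b = B₁ (circ a b)) ∧
    (∀ a b : G, B₂ b * B₂ a = B₂ (circ a b)) := by
  have sandwich : ∀ a b c, B₁ (circ a b) * c * B₂ (circ a b) = B₁ a * B₁ b * c * (B₂ b * B₂ a) := by
    intro a b c
    have h := hassoc a b c
    rw [hcirc (circ a b) c, hcirc a (circ b c), hcirc b c] at h
    rw [h]
    group
  exact ⟨fun a b => (eq_and_eq_of_forall_mul_mul_eq hcenter (sandwich a b)).1.symm,
    fun a b => (eq_and_eq_of_forall_mul_mul_eq hcenter (sandwich a b)).2.symm⟩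
end

section
/- Let G be a group with maps B₁, B₂: G → G such that the descendent operation a ∘ b = B₁(a)·b·B₂(a) is associative. Then for every a ∈ G, the element e_a = B₁(a)^{-1}·a·B₂(a)^{-1} is a left identity of the semigroup (G, ∘): e_a ∘ b = b for all b ∈ G. -/
/-! If `a ∘ e = a` and left multiplication by `a` is injective, associativity gives
`a ∘ (e ∘ b) = (a ∘ e) ∘ b = a ∘ b`, hence `e ∘ b = b`. For the descendent operation,
`b ↦ B₁(a)·b·B₂(a)` is injective since `G` is a group, and `a ∘ e_a = a` by construction. -/

theorem op_eq_self_of_assoc_of_injective {α : Type*} (op : α → α → α)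
    (hassoc : ∀ a b c, op (op a b) c = op a (op b c)) {a e : α}
    (hinj : Function.Injective (op a)) (he : op a e = a) (b : α) : op e b = b :=
  hinj <| by rw [← hassoc, he]

theorem mul_mul_injective {G : Type*} [Group G] (x y : G) :
    Function.Injective fun b => x * b * y :=
  (mul_left_injective y).comp (mul_right_injective x)

theorem stmt_7 {G : Type*} [Group G] (B₁ B₂ : G → G)
    (circ : G → G → G) (hcirc : ∀ a b, circ a b = B₁ a * b * B₂ a)
    (hassoc : ∀ a b c : G, circ (circ a b) c = circ a (circ b c)) :
    ∀ a b : G, circ ((B₁ a)⁻¹ * a * (B₂ a)⁻¹) b = b := by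
  intro a b
  have hcirc_fun : circ a = fun b => B₁ a * b * B₂ a := funext (hcirc a)
  refine op_eq_self_of_assoc_of_injective circ hassoc (a := a) ?_ ?_ b
  · exact hcirc_fun ▸ mul_mul_injective (B₁ a) (B₂ a)
  · rw [hcirc]
    group
end

section
/- Let (G, B₁, B₂) be a Rota-Baxter system of groups with descendent operation a ∘ b = B₁(a)·b·B₂(a). Then for every a ∈ G, B₁(e_a) = 1 and B₂(e_a) = 1, where e_a = B₁(a)^{-1}·a·B₂(a)^{-1}. -/
theorem stmt_8 {G : Type*} [Group G] (B₁ B₂ : G → G)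
    (h1 : ∀ a b : G, B₁ a * B₁ b = B₁ (B₁ a * b * B₂ a))
    (h2 : ∀ a b : G, B₂ b * B₂ a = B₂ (B₁ a * b * B₂ a)) :
    ∀ a : G, B₁ ((B₁ a)⁻¹ * a * (B₂ a)⁻¹) = 1 ∧ B₂ ((B₁ a)⁻¹ * a * (B₂ a)⁻¹) = 1 := by
  intro a
  have key : B₁ a * ((B₁ a)⁻¹ * a * (B₂ a)⁻¹) * B₂ a = a := by group
  have e1 := h1 a ((B₁ a)⁻¹ * a * (B₂ a)⁻¹)
  have e2 := h2 a ((B₁ a)⁻¹ * a * (B₂ a)⁻¹)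
  rw [key] at e1 e2
  exact ⟨mul_left_cancel (a := B₁ a) (by rw [e1, mul_one]),
    mul_right_cancel (b := B₂ a) (by rw [e2, one_mul])⟩
end

section
/- Let (G, B₁, B₂) be a Rota-Baxter system of groups. For a ∈ G set e_a = B₁(a)^{-1}·a·B₂(a)^{-1} and a† = B₁(a)^{-1}·e_a·B₂(a)^{-1}. Then B₁(a†) = B₁(a)^{-1} and B₂(a†) = B₂(a)^{-1} for all a ∈ G. -/
/-! The first axiom says that `B₁` turns `b ↦ B₁(a) b B₂(a)` into left multiplication by `B₁(a)`,
and the second that `B₂` turns it into right multiplication by `B₂(a)`. Applied to the inverse map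
`b ↦ B₁(a)⁻¹ b B₂(a)⁻¹`, this gives `B₁(e_a) = 1 = B₂(e_a)`, and one more application to
`a† = B₁(a)⁻¹ e_a B₂(a)⁻¹` gives the claim. -/

namespace RotaBaxterSystem

variable {G : Type*} [Group G] (B₁ B₂ : G → G)

theorem B₁_inv_mul_mul_inv (h1 : ∀ a b : G, B₁ a * B₁ b = B₁ (B₁ a * b * B₂ a)) (a b : G) :
    B₁ ((B₁ a)⁻¹ * b * (B₂ a)⁻¹) = (B₁ a)⁻¹ * B₁ b := by
  have h := h1 a ((B₁ a)⁻¹ * b * (B₂ a)⁻¹)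
  rw [show B₁ a * ((B₁ a)⁻¹ * b * (B₂ a)⁻¹) * B₂ a = b by group] at h
  rw [eq_inv_mul_iff_mul_eq, h]

theorem B₂_inv_mul_mul_inv (h2 : ∀ a b : G, B₂ b * B₂ a = B₂ (B₁ a * b * B₂ a)) (a b : G) :
    B₂ ((B₁ a)⁻¹ * b * (B₂ a)⁻¹) = B₂ b * (B₂ a)⁻¹ := by
  have h := h2 a ((B₁ a)⁻¹ * b * (B₂ a)⁻¹)
  rw [show B₁ a * ((B₁ a)⁻¹ * b * (B₂ a)⁻¹) * B₂ a = b by group] at h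
  rw [eq_mul_inv_iff_mul_eq, h]

end RotaBaxterSystem

theorem stmt_10 {G : Type*} [Group G] (B₁ B₂ : G → G)
    (h1 : ∀ a b : G, B₁ a * B₁ b = B₁ (B₁ a * b * B₂ a))
    (h2 : ∀ a b : G, B₂ b * B₂ a = B₂ (B₁ a * b * B₂ a)) :
    ∀ a : G,
      B₁ ((B₁ a)⁻¹ * ((B₁ a)⁻¹ * a * (B₂ a)⁻¹) * (B₂ a)⁻¹) = (B₁ a)⁻¹ ∧
      B₂ ((B₁ a)⁻¹ * ((B₁ a)⁻¹ * a * (B₂ a)⁻¹) * (B₂ a)⁻¹) = (B₂ a)⁻¹ := by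
  intro a
  have he₁ : B₁ ((B₁ a)⁻¹ * a * (B₂ a)⁻¹) = 1 := by
    rw [RotaBaxterSystem.B₁_inv_mul_mul_inv B₁ B₂ h1, inv_mul_cancel]
  have he₂ : B₂ ((B₁ a)⁻¹ * a * (B₂ a)⁻¹) = 1 := by
    rw [RotaBaxterSystem.B₂_inv_mul_mul_inv B₁ B₂ h2, mul_inv_cancel]
  constructor
  · rw [RotaBaxterSystem.B₁_inv_mul_mul_inv B₁ B₂ h1, he₁, mul_one]
  · rw [RotaBaxterSystem.B₂_inv_mul_mul_inv B₁ B₂ h2, he₂, one_mul]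
end

section
/- Let (G, B₁, B₂) be a Rota-Baxter system of groups. Then the images B₁(G) and B₂(G) are subgroups of G. -/
/-!
The first axiom gives `B₁ a * B₁ ((B₁ a)⁻¹ * g * (B₂ a)⁻¹) = B₁ g`, so the image of `B₁` is closed
under left division `x⁻¹ * y`; symmetrically the second axiom makes the image of `B₂` closed under
right division `x * y⁻¹`. A nonempty subset of a group closed under either division is a subgroup.
-/

namespace Subgroup

variable {G : Type*} [Group G]

theorem exists_coe_eq_of_inv_mul_mem {s : Set G} (hsn : s.Nonempty)
    (hs : ∀ x ∈ s, ∀ y ∈ s, x⁻¹ * y ∈ s) : ∃ H : Subgroup G, (H : Set G) = s := by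
  obtain ⟨z, hz⟩ := hsn
  have one_mem : (1 : G) ∈ s := inv_mul_cancel z ▸ hs z hz z hz
  have inv_mem : ∀ y ∈ s, y⁻¹ ∈ s := fun y hy => mul_one y⁻¹ ▸ hs y hy 1 one_mem
  refine ⟨ofDiv s ⟨z, hz⟩ fun x hx y hy => ?_, rfl⟩
  simpa only [inv_inv] using hs x⁻¹ (inv_mem x hx) y⁻¹ (inv_mem y hy)

end Subgroup

section RotaBaxterSystem

variable {G : Type*} [Group G] {B₁ B₂ : G → G}

theorem inv_mul_mem_range_of_rotaBaxter_left
    (h1 : ∀ a b : G, B₁ a * B₁ b = B₁ (B₁ a * b * B₂ a)) (a g : G) :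
    (B₁ a)⁻¹ * B₁ g ∈ Set.range B₁ := by
  refine ⟨(B₁ a)⁻¹ * g * (B₂ a)⁻¹, eq_inv_mul_of_mul_eq ?_⟩
  rw [h1]
  group

theorem mul_inv_mem_range_of_rotaBaxter_right
    (h2 : ∀ a b : G, B₂ b * B₂ a = B₂ (B₁ a * b * B₂ a)) (a g : G) :
    B₂ g * (B₂ a)⁻¹ ∈ Set.range B₂ := by
  refine ⟨(B₁ a)⁻¹ * g * (B₂ a)⁻¹, eq_mul_inv_of_mul_eq ?_⟩
  rw [h2]
  group

end RotaBaxterSystem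

theorem stmt_11 {G : Type*} [Group G] (B₁ B₂ : G → G)
    (h1 : ∀ a b : G, B₁ a * B₁ b = B₁ (B₁ a * b * B₂ a))
    (h2 : ∀ a b : G, B₂ b * B₂ a = B₂ (B₁ a * b * B₂ a)) :
    (∃ H : Subgroup G, (H : Set G) = Set.range B₁) ∧
    (∃ K : Subgroup G, (K : Set G) = Set.range B₂) := by
  constructor
  · refine Subgroup.exists_coe_eq_of_inv_mul_mem (Set.range_nonempty B₁) ?_
    rintro _ ⟨a, rfl⟩ _ ⟨g, rfl⟩
    exact inv_mul_mem_range_of_rotaBaxter_left h1 a g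
  · refine ⟨Subgroup.ofDiv _ (Set.range_nonempty B₂) ?_, rfl⟩
    rintro _ ⟨g, rfl⟩ _ ⟨a, rfl⟩
    exact mul_inv_mem_range_of_rotaBaxter_right h2 a g
end

section
/- Let (G, B₁, B₂) be a Rota-Baxter system of groups with descendent operation ∘. For t₁, t₂ ∈ G, the map Ψ: G_{t₁} → G_{t₂} defined by Ψ(a) = a ∘ e_{t₂} is a group isomorphism between the groups (G_{t₁}, ∘) and (G_{t₂}, ∘). -/
/-!
The descendent operation `a ∘ b = B₁(a) b B₂(a)` is associative, and every `e_t` is a left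
identity for it on all of `G`: applying the two Rota-Baxter identities to `(t, e_t)`, where
`B₁(t) e_t B₂(t) = t`, gives `B₁(e_t) = B₂(e_t) = 1`. In any semigroup with left identities `e`
and `f`, right translation by `f` maps `{a | a ∘ e = a}` onto `{a | a ∘ f = a}` with inverse the
right translation by `e`, and it is multiplicative since `(a ∘ f) ∘ (b ∘ f) = a ∘ (f ∘ (b ∘ f))`.
-/

section LeftIdentity

variable {α : Type*} (op : α → α → α) [Std.Associative op] {e f : α}

theorem op_right_mapsTo (hf : op f f = f) (s : Set α) :
    Set.MapsTo (op · f) s {x | op x f = x} := fun a _ => by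
  show op (op a f) f = op a f
  rw [Std.Associative.assoc (op := op), hf]

theorem op_right_leftInvOn (hf : ∀ x, op f x = x) :
    Set.LeftInvOn (op · e) (op · f) {x | op x e = x} := fun x hx => by
  show op (op x f) e = x
  rw [Std.Associative.assoc (op := op), hf]
  exact hx

theorem op_right_bijOn (he : ∀ x, op e x = x) (hf : ∀ x, op f x = x) :
    Set.BijOn (op · f) {x | op x e = x} {x | op x f = x} :=
  Set.InvOn.bijOn ⟨op_right_leftInvOn op hf, op_right_leftInvOn op he⟩
    (op_right_mapsTo op (hf f) _) (op_right_mapsTo op (he e) _)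

theorem op_op_right (hf : ∀ x, op f x = x) (a b : α) :
    op (op a b) f = op (op a f) (op b f) := by
  simp only [Std.Associative.assoc, hf]

end LeftIdentity

section RotaBaxterSystem

variable {G : Type*} [Group G]

structure IsRotaBaxterSystem (B₁ B₂ : G → G) : Prop where
  mul_map₁ : ∀ a b, B₁ a * B₁ b = B₁ (B₁ a * b * B₂ a)
  mul_map₂ : ∀ a b, B₂ b * B₂ a = B₂ (B₁ a * b * B₂ a)

def descendent (B₁ B₂ : G → G) (a b : G) : G := B₁ a * b * B₂ a

/-- The element `e_t`. -/
def descendentUnit (B₁ B₂ : G → G) (t : G) : G := (B₁ t)⁻¹ * t * (B₂ t)⁻¹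

variable {B₁ B₂ : G → G}

theorem map₁_mul_descendentUnit_mul_map₂ (t : G) :
    B₁ t * descendentUnit B₁ B₂ t * B₂ t = t := by
  simp only [descendentUnit]
  group

namespace IsRotaBaxterSystem

variable (hB : IsRotaBaxterSystem B₁ B₂)
include hB

theorem descendent_assoc : Std.Associative (descendent B₁ B₂) :=
  ⟨fun a b c => by
    simp only [descendent]
    rw [← hB.mul_map₁, ← hB.mul_map₂]
    group⟩

theorem map₁_descendentUnit (t : G) : B₁ (descendentUnit B₁ B₂ t) = 1 := by
  have h := hB.mul_map₁ t (descendentUnit B₁ B₂ t)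
  rw [map₁_mul_descendentUnit_mul_map₂] at h
  exact mul_eq_left.mp h

theorem map₂_descendentUnit (t : G) : B₂ (descendentUnit B₁ B₂ t) = 1 := by
  have h := hB.mul_map₂ t (descendentUnit B₁ B₂ t)
  rw [map₁_mul_descendentUnit_mul_map₂] at h
  exact mul_eq_right.mp h

theorem descendentUnit_descendent (t x : G) :
    descendent B₁ B₂ (descendentUnit B₁ B₂ t) x = x := by
  rw [descendent, hB.map₁_descendentUnit, hB.map₂_descendentUnit, one_mul, mul_one]

end IsRotaBaxterSystem

end RotaBaxterSystem

theorem stmt_15 {G : Type*} [Group G] (B₁ B₂ : G → G)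
    (h1 : ∀ a b : G, B₁ a * B₁ b = B₁ (B₁ a * b * B₂ a))
    (h2 : ∀ a b : G, B₂ b * B₂ a = B₂ (B₁ a * b * B₂ a))
    (circ : G → G → G) (hcirc : ∀ a b, circ a b = B₁ a * b * B₂ a)
    (t₁ t₂ : G) (e₁ e₂ : G)
    (he₁ : e₁ = (B₁ t₁)⁻¹ * t₁ * (B₂ t₁)⁻¹) (he₂ : e₂ = (B₁ t₂)⁻¹ * t₂ * (B₂ t₂)⁻¹)
    (S₁ S₂ : Set G) (hS₁ : S₁ = {a : G | circ a e₁ = a}) (hS₂ : S₂ = {a : G | circ a e₂ = a})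
    (Ψ : G → G) (hΨ : ∀ a, Ψ a = circ a e₂) :
    Set.BijOn Ψ S₁ S₂ ∧ ∀ a ∈ S₁, ∀ b ∈ S₁, Ψ (circ a b) = circ (Ψ a) (Ψ b) := by
  have hB : IsRotaBaxterSystem B₁ B₂ := ⟨h1, h2⟩
  have := hB.descendent_assoc
  obtain rfl : circ = descendent B₁ B₂ := funext₂ hcirc
  obtain rfl : Ψ = (descendent B₁ B₂ · e₂) := funext hΨ
  obtain rfl : e₁ = descendentUnit B₁ B₂ t₁ := he₁
  obtain rfl : e₂ = descendentUnit B₁ B₂ t₂ := he₂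
  subst hS₁ hS₂
  exact ⟨op_right_bijOn _ (hB.descendentUnit_descendent t₁) (hB.descendentUnit_descendent t₂),
    fun a _ b _ => op_op_right _ (hB.descendentUnit_descendent t₂) a b⟩
end

section
/- Let (G, B₁, B₂) be a Rota-Baxter system of groups with descendent operation ∘. Then the sets G_t = {a ∈ G | a ∘ e_t = a}, for t ∈ G, partition G: every element of G lies in exactly one set G_t (distinct sets G_{t₁}, G_{t₂} are either equal or disjoint, and G is their union). -/
/-!
Since `a ∘ b = B₁(a) b B₂(a)`, the equation `a ∘ b = a` has the unique solution `b = e_a`.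
Hence `a ∈ G_t` exactly when `e_a = e_t`, i.e. `G_t` is the fiber of `e` over `e_t`, and the
fibers of a map partition its domain.
-/

theorem Set.preimage_singleton_eq_or_disjoint {α β : Type*} (f : α → β) (x y : β) :
    f ⁻¹' {x} = f ⁻¹' {y} ∨ Disjoint (f ⁻¹' {x}) (f ⁻¹' {y}) := by
  obtain rfl | hxy := eq_or_ne x y
  · exact Or.inl rfl
  · exact Or.inr ((Set.disjoint_singleton.2 hxy).preimage f)

theorem mul_mul_eq_iff_eq_inv_mul_mul_inv {G : Type*} [Group G] (x y a b : G) :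
    x * b * y = a ↔ b = x⁻¹ * a * y⁻¹ := by
  rw [eq_mul_inv_iff_mul_eq, eq_inv_mul_iff_mul_eq, mul_assoc]

theorem stmt_17_general {G : Type*} [Group G] (B₁ B₂ : G → G)
    (circ : G → G → G) (hcirc : ∀ a b, circ a b = B₁ a * b * B₂ a)
    (e : G → G) (he : ∀ t, e t = (B₁ t)⁻¹ * t * (B₂ t)⁻¹)
    (Gt : G → Set G) (hGt : ∀ t, Gt t = {a : G | circ a (e t) = a}) :
    (∀ a : G, ∃ t : G, a ∈ Gt t) ∧
    (∀ t₁ t₂ : G, Gt t₁ = Gt t₂ ∨ Disjoint (Gt t₁) (Gt t₂)) := by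
  have fiber : ∀ t, Gt t = e ⁻¹' {e t} := by
    intro t
    ext a
    rw [hGt, Set.mem_ofPred_eq, hcirc, mul_mul_eq_iff_eq_inv_mul_mul_inv, ← he]
    exact eq_comm
  refine ⟨fun a => ⟨a, by rw [fiber]; rfl⟩, fun t₁ t₂ => ?_⟩
  rw [fiber, fiber]
  exact Set.preimage_singleton_eq_or_disjoint e _ _

theorem stmt_17 {G : Type*} [Group G] (B₁ B₂ : G → G)
    (h1 : ∀ a b : G, B₁ a * B₁ b = B₁ (B₁ a * b * B₂ a))
    (h2 : ∀ a b : G, B₂ b * B₂ a = B₂ (B₁ a * b * B₂ a))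
    (circ : G → G → G) (hcirc : ∀ a b, circ a b = B₁ a * b * B₂ a)
    (e : G → G) (he : ∀ t, e t = (B₁ t)⁻¹ * t * (B₂ t)⁻¹)
    (Gt : G → Set G) (hGt : ∀ t, Gt t = {a : G | circ a (e t) = a}) :
    (∀ a : G, ∃ t : G, a ∈ Gt t) ∧
    (∀ t₁ t₂ : G, Gt t₁ = Gt t₂ ∨ Disjoint (Gt t₁) (Gt t₂)) :=
  stmt_17_general B₁ B₂ circ hcirc e he Gt hGt
end

section
/- Let g be a Lie algebra and let B₁, B₂: g → g be linear maps such that (g, B₁, B₂) is a Rota-Baxter system of Lie algebras. Then the bilinear operation [u,v]_R = [B₁(u), B₁(v)] − [B₂(u), B₂(v)] is a Lie bracket on g (it is alternating and satisfies the Jacobi identity). -/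
/-! Under the Rota-Baxter system identities, `B₁` intertwines the bracket `[u,v]_R` with the bracket
of `g` and `B₂` intertwines it with the opposite bracket. Hence a double bracket
`[a,[b,c]_R]_R` equals `[B₁ a,[B₁ b,B₁ c]] + [B₂ a,[B₂ b,B₂ c]]`, and the Jacobi identity for
`[·,·]_R` is the sum of the Jacobi identities of `g` for the triples `Bᵢ a, Bᵢ b, Bᵢ c`. -/

namespace RotaBaxterSystem

variable {L : Type*} [LieRing L] (B₁ B₂ : L → L)

def bracket (u v : L) : L := ⁅B₁ u, B₁ v⁆ - ⁅B₂ u, B₂ v⁆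

theorem bracket_self (u : L) : bracket B₁ B₂ u u = 0 := by
  simp [bracket]

variable {B₁ B₂}

theorem bracket_bracket (h₁ : ∀ u v, ⁅B₁ u, B₁ v⁆ = B₁ (bracket B₁ B₂ u v))
    (h₂ : ∀ u v, ⁅B₂ v, B₂ u⁆ = B₂ (bracket B₁ B₂ u v)) (a b c : L) :
    bracket B₁ B₂ a (bracket B₁ B₂ b c) = ⁅B₁ a, ⁅B₁ b, B₁ c⁆⁆ + ⁅B₂ a, ⁅B₂ b, B₂ c⁆⁆ := by
  rw [bracket, ← h₁, ← h₂, ← lie_skew (B₂ c), lie_neg, sub_neg_eq_add]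

theorem bracket_jacobi (h₁ : ∀ u v, ⁅B₁ u, B₁ v⁆ = B₁ (bracket B₁ B₂ u v))
    (h₂ : ∀ u v, ⁅B₂ v, B₂ u⁆ = B₂ (bracket B₁ B₂ u v)) (u v w : L) :
    bracket B₁ B₂ u (bracket B₁ B₂ v w) + bracket B₁ B₂ v (bracket B₁ B₂ w u) +
      bracket B₁ B₂ w (bracket B₁ B₂ u v) = 0 := by
  simp only [bracket_bracket h₁ h₂]
  linear_combination (norm := abel)
    lie_jacobi (B₁ u) (B₁ v) (B₁ w) + lie_jacobi (B₂ u) (B₂ v) (B₂ w)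

end RotaBaxterSystem

theorem stmt_18 {K : Type*} {g : Type*} [Field K] [LieRing g] [LieAlgebra K g]
    (B₁ B₂ : g →ₗ[K] g)
    (h1 : ∀ u v : g, ⁅B₁ u, B₁ v⁆ = B₁ (⁅B₁ u, B₁ v⁆ - ⁅B₂ u, B₂ v⁆))
    (h2 : ∀ u v : g, ⁅B₂ v, B₂ u⁆ = B₂ (⁅B₁ u, B₁ v⁆ - ⁅B₂ u, B₂ v⁆))
    (brR : g → g → g) (hbr : ∀ u v, brR u v = ⁅B₁ u, B₁ v⁆ - ⁅B₂ u, B₂ v⁆) :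
    (∀ u : g, brR u u = 0) ∧
    (∀ u v w : g, brR u (brR v w) + brR v (brR w u) + brR w (brR u v) = 0) := by
  obtain rfl : brR = RotaBaxterSystem.bracket B₁ B₂ := funext₂ hbr
  exact ⟨RotaBaxterSystem.bracket_self B₁ B₂, RotaBaxterSystem.bracket_jacobi h1 h2⟩
end

section
/- Let g be a Lie algebra with linear maps B₁, B₂: g → g, and set φ = B₁ + B₂ and R = B₁ − B₂. Then (g, B₁, B₂) is a Rota-Baxter system of Lie algebras if and only if the pair (R, φ) satisfies the twisted modified Yang-Baxter equations: [R(u),R(v)] + [φ(u),φ(v)] = R([R(u),φ(v)] + [φ(u),R(v)]) and [R(u),φ(v)] + [φ(u),R(v)] = φ([R(u),φ(v)] + [φ(u),R(v)]) for all u,v ∈ g. -/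
/-!
Write `X = ⁅B₁ u, B₁ v⁆`, `Y = ⁅B₂ u, B₂ v⁆` and `D = X - Y`. By bilinearity of the bracket,
`⁅R u, R v⁆ + ⁅φ u, φ v⁆ = 2 (X + Y)` and `⁅R u, φ v⁆ + ⁅φ u, R v⁆ = 2 D`, so after cancelling the
factor `2` the twisted modified Yang–Baxter equations read `X + Y = B₁ D - B₂ D` and
`X - Y = B₁ D + B₂ D`. These are the difference and the sum of the two Rota–Baxter system equations
`X = B₁ D` and `-Y = B₂ D`, from which they can be recovered as `2` is invertible.
-/

theorem nsmul_two_injective_of_two_ne_zero {K M : Type*} [DivisionRing K] [AddCommGroup M]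
    [Module K M] (h2 : (2 : K) ≠ 0) : Function.Injective fun x : M ↦ 2 • x := by
  simpa only [ofNat_smul_eq_nsmul] using smul_right_injective M h2

theorem and_iff_sub_eq_sub_and_add_eq_add {M : Type*} [AddCommGroup M]
    (h2 : Function.Injective fun x : M ↦ 2 • x) {a b c d : M} :
    a = c ∧ b = d ↔ a - b = c - d ∧ a + b = c + d := by
  refine ⟨fun ⟨hac, hbd⟩ ↦ ⟨by rw [hac, hbd], by rw [hac, hbd]⟩, fun ⟨hsub, hadd⟩ ↦ ⟨h2 ?_, h2 ?_⟩⟩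
  · calc 2 • a = (a - b) + (a + b) := by abel
      _ = (c - d) + (c + d) := by rw [hsub, hadd]
      _ = 2 • c := by abel
  · calc 2 • b = (a + b) - (a - b) := by abel
      _ = (c + d) - (c - d) := by rw [hsub, hadd]
      _ = 2 • d := by abel

section LieRing

variable {L : Type*} [LieRing L]

theorem lie_sub_add_add_lie_add_sub (x y z w : L) :
    ⁅x - y, z + w⁆ + ⁅x + y, z - w⁆ = 2 • (⁅x, z⁆ - ⁅y, w⁆) := by
  simp only [sub_lie, add_lie, lie_sub, lie_add]
  abel

theorem lie_sub_sub_add_lie_add_add (x y z w : L) :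
    ⁅x - y, z - w⁆ + ⁅x + y, z + w⁆ = 2 • (⁅x, z⁆ + ⁅y, w⁆) := by
  simp only [sub_lie, add_lie, lie_sub, lie_add]
  abel

end LieRing

theorem stmt_19 {K : Type*} {g : Type*} [Field K] [LieRing g] [LieAlgebra K g]
    (hchar : (2 : K) ≠ 0)
    (B₁ B₂ : g →ₗ[K] g) (R φ : g →ₗ[K] g) (hR : R = B₁ - B₂) (hφ : φ = B₁ + B₂) :
    ((∀ u v : g, ⁅B₁ u, B₁ v⁆ = B₁ (⁅B₁ u, B₁ v⁆ - ⁅B₂ u, B₂ v⁆)) ∧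
     (∀ u v : g, ⁅B₂ v, B₂ u⁆ = B₂ (⁅B₁ u, B₁ v⁆ - ⁅B₂ u, B₂ v⁆))) ↔
    ((∀ u v : g, ⁅R u, R v⁆ + ⁅φ u, φ v⁆ = R (⁅R u, φ v⁆ + ⁅φ u, R v⁆)) ∧
     (∀ u v : g, ⁅R u, φ v⁆ + ⁅φ u, R v⁆ = φ (⁅R u, φ v⁆ + ⁅φ u, R v⁆))) := by
  subst hR hφ
  have h2 : Function.Injective fun x : g ↦ 2 • x := nsmul_two_injective_of_two_ne_zero hchar
  simp only [← forall_and]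
  refine forall₂_congr fun u v ↦ ?_
  rw [← lie_skew (B₂ v)]
  simp only [LinearMap.sub_apply, LinearMap.add_apply, lie_sub_add_add_lie_add_sub,
    lie_sub_sub_add_lie_add_add, map_nsmul, h2.eq_iff]
  rw [and_iff_sub_eq_sub_and_add_eq_add h2, sub_neg_eq_add, ← sub_eq_add_neg]
end
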